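/- Let L = (S, Act, →) be a labelled transition system, σ a path in L, and π, π' ACTL* path formulas. Then L,σ ⊨ π U π' if and only if ks(L), ks(σ) ⊨ (F ⇒ ks(π)) U (F ∧ ks(π')). -/

import Mathlib

/-!
Statement 1: the until case of the truth-preservation theorem for the mapping `ks` from ACTL* (over labelled transition systems) to
CTL* (over Kripke structures) preserves truth:
`L,σ ⊨ φ` iff `ks(L), ks(σ) ⊨ ks(φ)`.
-/

namespace Stmt1

/-- A path in a labelled transition system with transition relation `Tr ⊆ S × Act × S`. -/
structure LPath {S Act : Type} (Tr : S → Act → S → Prop) where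
  states : ℕ → S
  acts : ℕ → Act
  valid : ∀ n, Tr (states n) (acts n) (states (n + 1))

/-- The suffix of a path, starting at position `k`. -/
def LPath.suffix {S Act : Type} {Tr : S → Act → S → Prop} (σ : LPath Tr) (k : ℕ) :
    LPath Tr where
  states n := σ.states (n + k)
  acts n := σ.acts (n + k)
  valid n := by
    have h := σ.valid (n + k)
    rwa [show n + k + 1 = n + 1 + k by omega] at h

/-- A path in a Kripke structure with transition relation `R ⊆ S × S`. -/
structure KPath {S : Type} (R : S → S → Prop) where
  states : ℕ → S
  valid : ∀ n, R (states n) (states (n + 1))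

/-- The suffix of a path in a Kripke structure, starting at position `k`. -/
def KPath.suffix {S : Type} {R : S → S → Prop} (σ : KPath R) (k : ℕ) : KPath R where
  states n := σ.states (n + k)
  valid n := by
    have h := σ.valid (n + k)
    rwa [show n + k + 1 = n + 1 + k by omega] at h

mutual
/-- ACTL* state formulas over actions `Act`:
`φ ::= true | ¬φ | φ∧φ' | ∃π`. -/
inductive ASF (Act : Type) : Type
  | tt : ASF Act
  | neg : ASF Act → ASF Act
  | and : ASF Act → ASF Act → ASF Act
  | ex : APF Act → ASF Act

/-- ACTL* path formulas over actions `Act`: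
`π ::= φ | ¬π | π∧π' | Xπ | X_a π | π U π'`. -/
inductive APF (Act : Type) : Type
  | state : ASF Act → APF Act
  | neg : APF Act → APF Act
  | and : APF Act → APF Act → APF Act
  | next : APF Act → APF Act
  | anext : Act → APF Act → APF Act
  | unt : APF Act → APF Act → APF Act
end

mutual
/-- Satisfaction of ACTL* state formulas at a state of an LTS. -/
def asatS {S Act : Type} (Tr : S → Act → S → Prop) : ASF Act → S → Prop
  | .tt, _ => True
  | .neg φ, s => ¬ asatS Tr φ s
  | .and φ ψ, s => asatS Tr φ s ∧ asatS Tr ψ s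
  | .ex π, s => ∃ σ : LPath Tr, σ.states 0 = s ∧ asatP Tr π σ

/-- Satisfaction of ACTL* path formulas on a path of an LTS. -/
def asatP {S Act : Type} (Tr : S → Act → S → Prop) : APF Act → LPath Tr → Prop
  | .state φ, σ => asatS Tr φ (σ.states 0)
  | .neg π, σ => ¬ asatP Tr π σ
  | .and π π', σ => asatP Tr π σ ∧ asatP Tr π' σ
  | .next π, σ => asatP Tr π (σ.suffix 1)
  | .anext a π, σ => σ.acts 0 = a ∧ asatP Tr π (σ.suffix 1)
  | .unt π π', σ => ∃ j, asatP Tr π' (σ.suffix j) ∧ ∀ i < j, asatP Tr π (σ.suffix i)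
end

mutual
/-- CTL* state formulas over atomic propositions `AP`:
`φ ::= true | p | ¬φ | φ∧φ' | ∃π`. -/
inductive CSF (AP : Type) : Type
  | tt : CSF AP
  | atom : AP → CSF AP
  | neg : CSF AP → CSF AP
  | and : CSF AP → CSF AP → CSF AP
  | ex : CPF AP → CSF AP

/-- CTL* path formulas over atomic propositions `AP`:
`π ::= φ | ¬π | π∧π' | Xπ | π U π'`. -/
inductive CPF (AP : Type) : Type
  | state : CSF AP → CPF AP
  | neg : CPF AP → CPF AP
  | and : CPF AP → CPF AP → CPF AP
  | next : CPF AP → CPF AP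
  | unt : CPF AP → CPF AP → CPF AP
end

mutual
/-- Satisfaction of CTL* state formulas at a state of a Kripke structure. -/
def csatS {S AP : Type} (R : S → S → Prop) (Lab : S → Set AP) : CSF AP → S → Prop
  | .tt, _ => True
  | .atom p, s => p ∈ Lab s
  | .neg φ, s => ¬ csatS R Lab φ s
  | .and φ ψ, s => csatS R Lab φ s ∧ csatS R Lab ψ s
  | .ex π, s => ∃ σ : KPath R, σ.states 0 = s ∧ csatP R Lab π σ

/-- Satisfaction of CTL* path formulas on a path of a Kripke structure. -/
def csatP {S AP : Type} (R : S → S → Prop) (Lab : S → Set AP) : CPF AP → KPath R → Prop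
  | .state φ, σ => csatS R Lab φ (σ.states 0)
  | .neg π, σ => ¬ csatP R Lab π σ
  | .and π π', σ => csatP R Lab π σ ∧ csatP R Lab π' σ
  | .next π, σ => csatP R Lab π (σ.suffix 1)
  | .unt π π', σ => ∃ j, csatP R Lab π' (σ.suffix j) ∧ ∀ i < j, csatP R Lab π (σ.suffix i)
end

section ksConstruction

variable {S Act : Type} (Tr : S → Act → S → Prop)

/-- States of the Kripke structure `ks(L)`: the states of `L` together with one fresh
state for each transition of `L`. -/
abbrev KState := S ⊕ {t : S × Act × S // Tr t.1 t.2.1 t.2.2}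

/-- The fresh atomic proposition `F` (the atomic propositions of `ks(L)` are `Act ∪ {F}`). -/
def Fprop : Act ⊕ Unit := Sum.inr ()

/-- Transitions of `ks(L)`: for every transition `(s₀, α, s₁)` of `L`, the new state
`(s₀, α, s₁)` sits between `s₀` and `s₁`. -/
def KTrans : KState Tr → KState Tr → Prop
  | .inl s, .inr t => t.1.1 = s
  | .inr t, .inl s => t.1.2.2 = s
  | _, _ => False

/-- Labelling of `ks(L)`: original states are labelled `{F}`, the state corresponding to a
transition `(s₀, α, s₁)` is labelled `{α}`. -/
def KLab : KState Tr → Set (Act ⊕ Unit)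
  | .inl _ => {Sum.inr ()}
  | .inr t => {Sum.inl t.1.2.1}

/-- The path `ks(σ)` in `ks(L)` induced by a path `σ` in `L`: between consecutive states of
`σ` the corresponding transition-state is inserted. -/
def ksPath (σ : LPath Tr) : KPath (KTrans Tr) where
  states n :=
    if n % 2 = 0 then Sum.inl (σ.states (n / 2))
    else Sum.inr ⟨(σ.states (n / 2), σ.acts (n / 2), σ.states (n / 2 + 1)), σ.valid (n / 2)⟩
  valid n := by
    rcases Nat.even_or_odd n with ⟨k, hk⟩ | ⟨k, hk⟩
    · have h1 : n % 2 = 0 := by omega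
      have h2 : ¬ (n + 1) % 2 = 0 := by omega
      have h3 : (n + 1) / 2 = n / 2 := by omega
      simp only [h1, h2, if_true, if_false, h3, KTrans]
    · have h1 : ¬ n % 2 = 0 := by omega
      have h2 : (n + 1) % 2 = 0 := by omega
      have h3 : (n + 1) / 2 = n / 2 + 1 := by omega
      simp only [h1, h2, if_true, if_false, h3, KTrans]

end ksConstruction

/-- The atomic proposition `F`, as a CTL* path formula. -/
def Fpf (Act : Type) : CPF (Act ⊕ Unit) := .state (.atom (Sum.inr ()))

mutual
/-- The translation `ks` from ACTL* state formulas to CTL* state formulas. -/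
def ksS {Act : Type} : ASF Act → CSF (Act ⊕ Unit)
  | .tt => .tt
  | .neg φ => .neg (ksS φ)
  | .and φ ψ => .and (ksS φ) (ksS ψ)
  | .ex π => .ex (ksP π)

/-- The translation `ks` from ACTL* path formulas to CTL* path formulas.
(Implication `F ⇒ ψ` is expressed as `¬(F ∧ ¬ψ)`.) -/
def ksP {Act : Type} : APF Act → CPF (Act ⊕ Unit)
  | .state φ => .state (ksS φ)
  | .neg π => .neg (ksP π)
  | .and π π' => .and (ksP π) (ksP π')
  | .next π => .next (.next (ksP π))
  | .anext a π => .and (.next (.state (.atom (Sum.inl a)))) (.next (.next (ksP π)))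
  | .unt π π' =>
      .unt (.neg (.and (Fpf Act) (.neg (ksP π)))) (.and (Fpf Act) (ksP π'))
end

/-!
In `ks(L)` original states and transition-states alternate, so `ks(σ)` visits original
states (the ones labelled `F`) exactly at its even positions, and its suffix at `2k` is
`ks` of the suffix of `σ` at `k`. The guards `F ⇒ ·` and `F ∧ ·` therefore restrict the
CTL* until to even positions, where it coincides with the ACTL* until. As `ks(π)` may
contain path quantifiers, this needs truth preservation for all formulas, proved by mutual
induction; the quantifier case rests on the fact that every path of `ks(L)` starting in an
original state is `ks(σ)` for a path `σ` of `L`.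
-/

theorem until_on_even_iff (A B : ℕ → Prop) :
    (∃ j, B (2 * j) ∧ ∀ i < j, A (2 * i)) ↔ ∃ j, (Even j ∧ B j) ∧ ∀ i < j, Even i → A i := by
  constructor
  · rintro ⟨j, hB, hA⟩
    refine ⟨2 * j, ⟨even_two_mul j, hB⟩, ?_⟩
    rintro _ hi ⟨i, rfl⟩
    rw [← two_mul]
    exact hA i (by omega)
  · rintro ⟨_, ⟨⟨j, rfl⟩, hB⟩, hA⟩
    rw [← two_mul] at hB
    exact ⟨j, hB, fun i hi => hA (2 * i) (by omega) (even_two_mul i)⟩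

theorem KPath.ext {S : Type} {R : S → S → Prop} {ρ ρ' : KPath R}
    (h : ρ.states = ρ'.states) : ρ = ρ' := by
  cases ρ
  cases ρ'
  cases h
  rfl

theorem KPath.suffix_states {S : Type} {R : S → S → Prop} (ρ : KPath R) (k n : ℕ) :
    (ρ.suffix k).states n = ρ.states (n + k) := rfl

theorem KPath.suffix_suffix {S : Type} {R : S → S → Prop} (ρ : KPath R) (a b : ℕ) :
    (ρ.suffix a).suffix b = ρ.suffix (b + a) :=
  KPath.ext (funext fun n => by simp only [KPath.suffix_states, Nat.add_assoc])

section ksPath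

variable {S Act : Type} {Tr : S → Act → S → Prop}

theorem kTrans_inl_iff {s : S} {y : KState Tr} :
    KTrans Tr (.inl s) y ↔ ∃ t, y = .inr t ∧ t.1.1 = s := by
  cases y <;> simp [KTrans]

theorem kTrans_inr_iff {t : {t : S × Act × S // Tr t.1 t.2.1 t.2.2}} {y : KState Tr} :
    KTrans Tr (.inr t) y ↔ y = .inl t.1.2.2 := by
  cases y <;> simp [KTrans, eq_comm]

theorem ksPath_states_two_mul (σ : LPath Tr) (k : ℕ) :
    (ksPath Tr σ).states (2 * k) = .inl (σ.states k) := by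
  simp [ksPath]

theorem ksPath_states_zero (σ : LPath Tr) : (ksPath Tr σ).states 0 = .inl (σ.states 0) :=
  ksPath_states_two_mul σ 0

theorem ksPath_states_two_mul_add_one (σ : LPath Tr) (k : ℕ) :
    (ksPath Tr σ).states (2 * k + 1) =
      .inr ⟨(σ.states k, σ.acts k, σ.states (k + 1)), σ.valid k⟩ := by
  simp [ksPath, Nat.add_mod, Nat.add_div]

theorem ksPath_suffix (σ : LPath Tr) (k : ℕ) :
    (ksPath Tr σ).suffix (2 * k) = ksPath Tr (σ.suffix k) := by
  refine KPath.ext (funext fun n => ?_)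
  obtain ⟨m, rfl | rfl⟩ := Nat.even_or_odd' n
  · rw [KPath.suffix_states, ← Nat.mul_add, ksPath_states_two_mul, ksPath_states_two_mul]
    rfl
  · rw [KPath.suffix_states, show 2 * m + 1 + 2 * k = 2 * (m + k) + 1 by ring,
      ksPath_states_two_mul_add_one, ksPath_states_two_mul_add_one]
    simp only [LPath.suffix, Nat.add_right_comm m 1 k]

theorem csatP_Fpf_ksPath_suffix (σ : LPath Tr) (j : ℕ) :
    csatP (KTrans Tr) (KLab Tr) (Fpf Act) ((ksPath Tr σ).suffix j) ↔ Even j := by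
  simp only [Fpf, csatP, csatS, KPath.suffix_states, Nat.zero_add]
  obtain ⟨m, rfl | rfl⟩ := Nat.even_or_odd' j
  · simp [ksPath_states_two_mul, KLab]
  · simp [ksPath_states_two_mul_add_one, KLab]

theorem inl_mem_kLab_ksPath (σ : LPath Tr) (k : ℕ) (a : Act) :
    Sum.inl a ∈ KLab Tr ((ksPath Tr σ).states (2 * k + 1)) ↔ σ.acts k = a := by
  simp [ksPath_states_two_mul_add_one, KLab, eq_comm]

theorem exists_ksPath_eq (ρ : KPath (KTrans Tr)) {s : S} (h : ρ.states 0 = .inl s) :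
    ∃ σ : LPath Tr, σ.states 0 = s ∧ ksPath Tr σ = ρ := by
  have step : ∀ n s', ρ.states (2 * n) = .inl s' → ∃ t : {t : S × Act × S // Tr t.1 t.2.1 t.2.2},
      ρ.states (2 * n) = .inl t.1.1 ∧ ρ.states (2 * n + 1) = .inr t ∧
        ρ.states (2 * (n + 1)) = .inl t.1.2.2 := by
    intro n s' hs
    have hsrc := ρ.valid (2 * n)
    rw [hs, kTrans_inl_iff] at hsrc
    obtain ⟨t, ht, rfl⟩ := hsrc
    have htgt := ρ.valid (2 * n + 1)
    rw [ht, kTrans_inr_iff] at htgt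
    exact ⟨t, hs, ht, htgt⟩
  have even_inl : ∀ n, ∃ s, ρ.states (2 * n) = .inl s := by
    intro n
    induction n with
    | zero => exact ⟨s, h⟩
    | succ n ih =>
      obtain ⟨s', hs'⟩ := ih
      obtain ⟨t, -, -, ht⟩ := step n s' hs'
      exact ⟨_, ht⟩
  choose t hsrc hmid htgt using fun n => step n _ (even_inl n).choose_spec
  have link : ∀ n, (t n).1.2.2 = (t (n + 1)).1.1 :=
    fun n => Sum.inl_injective ((htgt n).symm.trans (hsrc (n + 1)))
  let σ : LPath Tr :=
    ⟨fun n => (t n).1.1, fun n => (t n).1.2.1, fun n => link n ▸ (t n).2⟩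
  refine ⟨σ, Sum.inl_injective ((hsrc 0).symm.trans h), KPath.ext (funext fun n => ?_)⟩
  obtain ⟨m, rfl | rfl⟩ := Nat.even_or_odd' n
  · rw [ksPath_states_two_mul, hsrc]
  · rw [ksPath_states_two_mul_add_one, hmid]
    have hσ : σ.states (m + 1) = (t m).1.2.2 := (link m).symm
    simp only [hσ]
    rfl

end ksPath

mutual

theorem asatS_iff_csatS_ksS {S Act : Type} (Tr : S → Act → S → Prop) (φ : ASF Act) (s : S) :
    asatS Tr φ s ↔ csatS (KTrans Tr) (KLab Tr) (ksS φ) (.inl s) := by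
  match φ with
  | .tt => simp only [asatS, csatS, ksS]
  | .neg φ =>
    simp only [asatS, csatS, ksS]
    exact not_congr (asatS_iff_csatS_ksS Tr φ s)
  | .and φ ψ =>
    simp only [asatS, csatS, ksS]
    exact and_congr (asatS_iff_csatS_ksS Tr φ s) (asatS_iff_csatS_ksS Tr ψ s)
  | .ex π =>
    simp only [asatS, csatS, ksS]
    constructor
    · rintro ⟨σ, rfl, hπ⟩
      exact ⟨ksPath Tr σ, ksPath_states_zero σ, (asatP_iff_csatP_ksP Tr π σ).mp hπ⟩
    · rintro ⟨ρ, hρ, hπ⟩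
      obtain ⟨σ, hσ, rfl⟩ := exists_ksPath_eq ρ hρ
      exact ⟨σ, hσ, (asatP_iff_csatP_ksP Tr π σ).mpr hπ⟩

theorem asatP_iff_csatP_ksP {S Act : Type} (Tr : S → Act → S → Prop) (π : APF Act)
    (σ : LPath Tr) :
    asatP Tr π σ ↔ csatP (KTrans Tr) (KLab Tr) (ksP π) (ksPath Tr σ) := by
  match π with
  | .state φ =>
    simp only [asatP, csatP, ksP]
    rw [ksPath_states_zero]
    exact asatS_iff_csatS_ksS Tr φ (σ.states 0)
  | .neg π =>
    simp only [asatP, csatP, ksP]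
    exact not_congr (asatP_iff_csatP_ksP Tr π σ)
  | .and π π' =>
    simp only [asatP, csatP, ksP]
    exact and_congr (asatP_iff_csatP_ksP Tr π σ) (asatP_iff_csatP_ksP Tr π' σ)
  | .next π =>
    simp only [asatP, csatP, ksP]
    rw [KPath.suffix_suffix, ← Nat.two_mul, ksPath_suffix]
    exact asatP_iff_csatP_ksP Tr π (σ.suffix 1)
  | .anext a π =>
    simp only [asatP, csatP, ksP, csatS, KPath.suffix_states]
    rw [KPath.suffix_suffix, ← Nat.two_mul, ksPath_suffix,
      show (0 + 1 : ℕ) = 2 * 0 + 1 from rfl, inl_mem_kLab_ksPath]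
    exact and_congr_right' (asatP_iff_csatP_ksP Tr π (σ.suffix 1))
  | .unt π π' =>
    have hπ : ∀ i, asatP Tr π (σ.suffix i) ↔
        csatP (KTrans Tr) (KLab Tr) (ksP π) ((ksPath Tr σ).suffix (2 * i)) := fun i => by
      rw [ksPath_suffix]
      exact asatP_iff_csatP_ksP Tr π (σ.suffix i)
    have hπ' : ∀ i, asatP Tr π' (σ.suffix i) ↔
        csatP (KTrans Tr) (KLab Tr) (ksP π') ((ksPath Tr σ).suffix (2 * i)) := fun i => by
      rw [ksPath_suffix]
      exact asatP_iff_csatP_ksP Tr π' (σ.suffix i)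
    simp only [asatP, csatP, ksP, hπ, hπ', csatP_Fpf_ksPath_suffix, not_and, not_not]
    exact until_on_even_iff (fun i => csatP _ _ (ksP π) ((ksPath Tr σ).suffix i))
      (fun j => csatP _ _ (ksP π') ((ksPath Tr σ).suffix j))

end

/-- Let `L` be an LTS, `σ` a path in `L`, and `π, π'` ACTL* path
formulas. Then `L,σ ⊨ π U π'` iff
`ks(L), ks(σ) ⊨ (F ⇒ ks(π)) U (F ∧ ks(π'))`. -/
theorem ks_preserves_until {S Act : Type} (Tr : S → Act → S → Prop)
    (σ : LPath Tr) (π π' : APF Act) :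
    asatP Tr (.unt π π') σ ↔
      csatP (KTrans Tr) (KLab Tr)
        (.unt (.neg (.and (Fpf Act) (.neg (ksP π)))) (.and (Fpf Act) (ksP π')))
        (ksPath Tr σ) :=
  asatP_iff_csatP_ksP Tr (.unt π π') σ

end Stmt1
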